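/- arXiv:1909.04762 — 3 statements merged into one kernel-verified Lean document; each statement's English description precedes it below -/
import Mathlib

section
/- Let f, h ∈ ℤ[t] with h not identically zero. Then there exist a threshold T ∈ ℕ, a period N ∈ ℕ (N ≥ 1), and polynomials g_0, ..., g_{N-1} ∈ ℚ[t] such that for all integers t > T, if t ≡ i (mod N) then ⌊f(t)/h(t)⌋ = g_i(t). Moreover all the g_i have the same degree and the same leading coefficient. -/
open Polynomial Filter

lemma floorA (m : ℤ) (D : ℕ) (hD : 0 < D) (ε : ℚ) (h0 : 0 ≤ ε) (h1 : ε < 1 / D) :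
    ⌊(m : ℚ) / D + ε⌋ = m / D := by
  have hD' : (0:ℚ) < D := by exact_mod_cast hD
  have hDz : (D:ℤ) ≠ 0 := by exact_mod_cast hD.ne'
  have hs0 : (0:ℤ) ≤ m % D := Int.emod_nonneg m hDz
  have hs1 : m % D < D := Int.emod_lt_of_pos m (by exact_mod_cast hD)
  have hm : (D:ℤ) * (m / D) + m % D = m := Int.mul_ediv_add_emod m D
  have hmQ : (m:ℚ) = D * ((m / D : ℤ) : ℚ) + ((m % D : ℤ) : ℚ) := by exact_mod_cast hm.symm
  have hS0 : (0:ℚ) ≤ ((m % D : ℤ):ℚ) := by exact_mod_cast hs0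
  have hS1 : ((m % D : ℤ):ℚ) ≤ (D:ℚ) - 1 := by
    have : m % D ≤ (D:ℤ) - 1 := by omega
    exact_mod_cast this
  have hεD : ε * D < 1 := (lt_div_iff₀ hD').mp h1
  have hx : (m:ℚ)/D + ε = ((m / D : ℤ):ℚ) + (((m % D : ℤ):ℚ) + ε*D)/D := by
    rw [hmQ]; field_simp; ring
  rw [Int.floor_eq_iff, hx]
  constructor
  · have : (0:ℚ) ≤ (((m % D : ℤ):ℚ) + ε*D)/D :=
      div_nonneg (by positivity) hD'.le
    linarith
  · have : (((m % D : ℤ):ℚ) + ε*D)/D < 1 := by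
      rw [div_lt_one hD']; linarith
    linarith

lemma floorB (m : ℤ) (D : ℕ) (hD : 0 < D) (ε : ℚ) (h0 : ε < 0) (h1 : -(1 / D) < ε) :
    ⌊(m : ℚ) / D + ε⌋ = (m - 1) / D := by
  have hD' : (0:ℚ) < D := by exact_mod_cast hD
  have key := floorA (m - 1) D hD (ε + 1/D) (by linarith) (by linarith)
  rw [← key]
  congr 1
  push_cast
  field_simp
  ring

lemma evSign (p : ℚ[X]) (hp : p ≠ 0) :
    ∃ T : ℕ, (∀ t : ℕ, T < t → 0 < p.eval (t:ℚ)) ∨ (∀ t : ℕ, T < t → p.eval (t:ℚ) < 0) := by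
  by_cases hdeg : 0 < p.degree
  · rcases lt_or_gt_of_ne (leadingCoeff_ne_zero.mpr hp) with hlc | hlc
    · have ht : Tendsto (fun t : ℕ => p.eval (t:ℚ)) atTop atBot :=
        (p.tendsto_atBot_of_leadingCoeff_nonpos hdeg hlc.le).comp tendsto_natCast_atTop_atTop
      obtain ⟨a, ha⟩ := eventually_atTop.mp (ht.eventually_lt_atBot 0)
      exact ⟨a, Or.inr fun t htt => ha t htt.le⟩
    · have ht : Tendsto (fun t : ℕ => p.eval (t:ℚ)) atTop atTop :=
        (p.tendsto_atTop_of_leadingCoeff_nonneg hdeg hlc.le).comp tendsto_natCast_atTop_atTop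
      obtain ⟨a, ha⟩ := eventually_atTop.mp (ht.eventually_gt_atTop 0)
      exact ⟨a, Or.inl fun t htt => ha t htt.le⟩
  · have hc : p = C (p.coeff 0) := eq_C_of_degree_le_zero (not_lt.mp hdeg)
    have hc0 : p.coeff 0 ≠ 0 := fun h => hp (by rw [hc, h, map_zero])
    rcases lt_or_gt_of_ne hc0 with h | h
    · exact ⟨0, Or.inr fun t _ => by rw [hc]; simpa using h⟩
    · exact ⟨0, Or.inl fun t _ => by rw [hc]; simpa using h⟩

lemma lead_sub_C {A : ℚ[X]} (h : 0 < A.degree) (a : ℚ) :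
    (A - C a).leadingCoeff = A.leadingCoeff := by
  have hd : (A - C a).degree = A.degree := degree_sub_C h
  have hn : (A - C a).natDegree = A.natDegree := natDegree_eq_of_degree_eq hd
  have hne : A.natDegree ≠ 0 := by
    have := natDegree_pos_iff_degree_pos.mpr h
    omega
  rw [leadingCoeff, leadingCoeff, hn, coeff_sub, coeff_C, if_neg hne, sub_zero]

lemma aux_dl (A : ℚ[X]) (u : ℚ) (a b : ℚ) (h : 0 < A.degree ∨ a = b) :
    (C u * (A - C a)).degree = (C u * (A - C b)).degree ∧
    (C u * (A - C a)).leadingCoeff = (C u * (A - C b)).leadingCoeff := by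
  rcases h with h | rfl
  · by_cases hu : u = 0
    · simp [hu]
    · constructor
      · rw [degree_C_mul hu, degree_C_mul hu, degree_sub_C h, degree_sub_C h]
      · rw [leadingCoeff_mul, leadingCoeff_mul, lead_sub_C h, lead_sub_C h]
  · exact ⟨rfl, rfl⟩

open Polynomial Filter

/-- for `f, h ∈ ℤ[t]` with `h ≠ 0`, the function `t ↦ ⌊f(t)/h(t)⌋` is
eventually quasi-polynomial, and mildly so: all the constituent polynomials
have the same degree and leading coefficient. -/
theorem floor_div_is_mild_EQP (f h : Polynomial ℤ) (hh : h ≠ 0) :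
    ∃ (T : ℕ) (N : ℕ), 1 ≤ N ∧ ∃ g : ℕ → Polynomial ℚ,
      (∀ i j, i < N → j < N → (g i).degree = (g j).degree ∧
        (g i).leadingCoeff = (g j).leadingCoeff) ∧
      (∀ t : ℕ, T < t →
        ((⌊((Polynomial.eval (t : ℤ) f : ℤ) : ℚ) / ((Polynomial.eval (t : ℤ) h : ℤ) : ℚ)⌋ : ℚ) = (g (t % N)).eval (t : ℚ))) := by
  classical
  set fq : ℚ[X] := f.map (Int.castRingHom ℚ) with hfqdef
  set hq : ℚ[X] := h.map (Int.castRingHom ℚ) with hhqdef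
  have hq0 : hq ≠ 0 := by
    rw [hhqdef, Ne, Polynomial.map_eq_zero_iff (f := Int.castRingHom ℚ) Int.cast_injective]
    exact hh
  set q : ℚ[X] := fq / hq with hqdef
  set r : ℚ[X] := fq % hq with hrdef
  have hqr : hq * q + r = fq := EuclideanDomain.div_add_mod fq hq
  have hdeg : r.degree < hq.degree := EuclideanDomain.mod_lt fq hq0
  -- clear denominators of q
  obtain ⟨b, hb⟩ := IsLocalization.integerNormalization_map_to_map (nonZeroDivisors ℤ) q
  have hbz : (b : ℤ) ≠ 0 := nonZeroDivisors.coe_ne_zero b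
  set D : ℕ := (b : ℤ).natAbs with hDdef
  have hD : 0 < D := Int.natAbs_pos.mpr hbz
  have hD' : (0:ℚ) < (D:ℚ) := by exact_mod_cast hD
  obtain ⟨P, hP⟩ : ∃ P : Polynomial ℤ, P.map (Int.castRingHom ℚ) = ((D:ℤ)) • q := by
    rcases Int.natAbs_eq (b : ℤ) with hab | hab
    · exact ⟨_, by rw [← algebraMap_int_eq, hb, ← hab]⟩
    · refine ⟨-(IsLocalization.integerNormalization (nonZeroDivisors ℤ) q), ?_⟩
      rw [Polynomial.map_neg, ← algebraMap_int_eq, hb]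
      rw [show ((b:ℤ)) = -(D:ℤ) from hab]
      simp [neg_smul]
  have hqeval : ∀ x : ℤ, q.eval ((x:ℤ):ℚ) = ((P.eval x : ℤ) : ℚ) / (D:ℚ) := by
    intro x
    have h1 := congrArg (fun p : ℚ[X] => p.eval ((x:ℤ):ℚ)) hP
    simp only [eval_intCast_map, eval_smul, zsmul_eq_mul, eval_mul, eval_intCast, eval_natCast, eq_intCast,
      Int.cast_natCast] at h1
    rw [eq_div_iff hD'.ne']
    push_cast at h1 ⊢
    linear_combination -h1
  -- the main evaluation identity
  have hfeval : ∀ t : ℕ, hq.eval ((t:ℕ):ℚ) ≠ 0 →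
      ((f.eval ((t:ℕ):ℤ) : ℤ) : ℚ) / ((h.eval ((t:ℕ):ℤ) : ℤ) : ℚ)
        = ((P.eval ((t:ℕ):ℤ) : ℤ) : ℚ)/(D:ℚ) + r.eval ((t:ℕ):ℚ) / hq.eval ((t:ℕ):ℚ) := by
    intro t hne
    have hfc : ((f.eval ((t:ℕ):ℤ) : ℤ) : ℚ) = fq.eval ((t:ℕ):ℚ) := by
      rw [hfqdef]
      rw [show ((t:ℕ):ℚ) = (((t:ℕ):ℤ):ℚ) by push_cast; ring]
      rw [eval_intCast_map]; rfl
    have hhc : ((h.eval ((t:ℕ):ℤ) : ℤ) : ℚ) = hq.eval ((t:ℕ):ℚ) := by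
      rw [hhqdef]
      rw [show ((t:ℕ):ℚ) = (((t:ℕ):ℤ):ℚ) by push_cast; ring]
      rw [eval_intCast_map]; rfl
    have hqv : q.eval ((t:ℕ):ℚ) = ((P.eval ((t:ℕ):ℤ) : ℤ) : ℚ) / (D:ℚ) := by
      have := hqeval ((t:ℕ):ℤ)
      rwa [show (((t:ℕ):ℤ):ℚ) = ((t:ℕ):ℚ) by push_cast; ring] at this
    have hfv : fq.eval ((t:ℕ):ℚ) = hq.eval ((t:ℕ):ℚ) * q.eval ((t:ℕ):ℚ) + r.eval ((t:ℕ):ℚ) := by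
      conv_lhs => rw [← hqr]
      simp
    rw [hfc, hhc, hfv, hqv]
    field_simp
  -- thresholds
  obtain ⟨Th, hTh⟩ := evSign hq hq0
  have tends : Tendsto (fun t:ℕ => r.eval ((t:ℕ):ℚ) / hq.eval ((t:ℕ):ℚ)) atTop (nhds 0) :=
    (Polynomial.div_tendsto_zero_of_degree_lt r hq hdeg).comp tendsto_natCast_atTop_atTop
  obtain ⟨Ts, hTs⟩ := eventually_atTop.mp
    ((tends.eventually_lt_const (show (0:ℚ) < 1/(D:ℚ) by positivity)).and
      (tends.eventually_const_lt (show -(1/(D:ℚ)) < (0:ℚ) by simp; positivity)))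
  obtain ⟨Tε, hcase⟩ : ∃ Tε : ℕ,
      (∀ t : ℕ, Tε < t → 0 ≤ r.eval ((t:ℕ):ℚ) / hq.eval ((t:ℕ):ℚ)) ∨
      (∀ t : ℕ, Tε < t → r.eval ((t:ℕ):ℚ) / hq.eval ((t:ℕ):ℚ) < 0) := by
    by_cases hr : r = 0
    · exact ⟨0, Or.inl fun t _ => by simp [hr]⟩
    · obtain ⟨Tr, hTr⟩ := evSign r hr
      refine ⟨max Th Tr, ?_⟩
      rcases hTh with hhp | hhn
      · rcases hTr with hrp | hrn
        · exact Or.inl fun t ht => (div_pos (hrp t (lt_of_le_of_lt (le_max_right _ _) ht))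
            (hhp t (lt_of_le_of_lt (le_max_left _ _) ht))).le
        · exact Or.inr fun t ht => div_neg_of_neg_of_pos
            (hrn t (lt_of_le_of_lt (le_max_right _ _) ht))
            (hhp t (lt_of_le_of_lt (le_max_left _ _) ht))
      · rcases hTr with hrp | hrn
        · exact Or.inr fun t ht => div_neg_of_pos_of_neg
            (hrp t (lt_of_le_of_lt (le_max_right _ _) ht))
            (hhn t (lt_of_le_of_lt (le_max_left _ _) ht))
        · exact Or.inl fun t ht => (div_pos_of_neg_of_neg
            (hrn t (lt_of_le_of_lt (le_max_right _ _) ht))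
            (hhn t (lt_of_le_of_lt (le_max_left _ _) ht))).le
  set T : ℕ := max (max Th Ts) Tε with hTdef
  have hThT : ∀ t : ℕ, T < t → hq.eval ((t:ℕ):ℚ) ≠ 0 := by
    intro t ht
    rcases hTh with hhp | hhn
    · exact (hhp t (by omega)).ne'
    · exact (hhn t (by omega)).ne
  have hTsT : ∀ t : ℕ, T < t →
      r.eval ((t:ℕ):ℚ) / hq.eval ((t:ℕ):ℚ) < 1/(D:ℚ) ∧
      -(1/(D:ℚ)) < r.eval ((t:ℕ):ℚ) / hq.eval ((t:ℕ):ℚ) := by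
    intro t ht
    exact hTs t (by omega)
  -- dvd fact
  have hmodkey : ∀ t : ℕ, ((D:ℤ)) ∣ (P.eval ((t:ℕ):ℤ) - P.eval (((t % D : ℕ):ℕ):ℤ)) := by
    intro t
    have h0 : D * (t / D) + t % D = t := Nat.div_add_mod t D
    have h1 : ((t:ℕ):ℤ) - (((t % D : ℕ):ℕ):ℤ) = (D:ℤ) * ((t / D : ℕ):ℤ) := by
      have h0' := congrArg (Nat.cast : ℕ → ℤ) h0
      simp only [Nat.cast_add, Nat.cast_mul] at h0'
      linarith
    exact dvd_trans ⟨((t / D : ℕ):ℤ), h1⟩ (sub_dvd_eval_sub _ _ P)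
  -- "P is constant" fallback
  have hconst : ¬ 0 < (P.map (Int.castRingHom ℚ)).degree → ∀ i j : ℕ, P.eval ((i:ℕ):ℤ) = P.eval ((j:ℕ):ℤ) := by
    intro hnd i j
    rw [degree_map_eq_of_injective Int.cast_injective] at hnd
    have hPc : P = C (P.coeff 0) := eq_C_of_degree_le_zero (not_lt.mp hnd)
    rw [hPc]; simp
  rcases hcase with hpos | hneg
  · -- nonnegative error term
    set e : ℕ → ℤ := fun i => P.eval ((i:ℕ):ℤ) % (D:ℤ) with hedef
    refine ⟨T, D, hD, fun i => C ((D:ℚ))⁻¹ * (P.map (Int.castRingHom ℚ) - C ((e i : ℤ):ℚ)), ?_, ?_⟩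
    · intro i j _ _
      refine aux_dl _ _ _ _ ?_
      by_cases hnd : 0 < (P.map (Int.castRingHom ℚ)).degree
      · exact Or.inl hnd
      · right
        rw [hedef]
        simp only
        rw [hconst hnd i j]
    · intro t ht
      have hne := hThT t ht
      set m : ℤ := P.eval ((t:ℕ):ℤ) with hmdef
      have hfl : ⌊((f.eval ((t:ℕ):ℤ) : ℤ) : ℚ) / ((h.eval ((t:ℕ):ℤ) : ℤ) : ℚ)⌋ = m / (D:ℤ) := by
        rw [hfeval t hne]
        exact floorA m D hD _ (hpos t (by omega)) (hTsT t ht).1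
      rw [hfl]
      have hgv : (C ((D:ℚ))⁻¹ * (P.map (Int.castRingHom ℚ) - C ((e (t % D) : ℤ):ℚ))).eval ((t:ℕ):ℚ)
          = ((D:ℚ))⁻¹ * (((m:ℤ):ℚ) - ((e (t % D) : ℤ):ℚ)) := by
        rw [show ((t:ℕ):ℚ) = (((t:ℕ):ℤ):ℚ) by push_cast; ring]
        simp [eval_intCast_map, hmdef]
      rw [hgv]
      -- arithmetic
      have hme : m % (D:ℤ) = e (t % D) := by
        have : Int.ModEq (D:ℤ) m (P.eval (((t % D : ℕ):ℕ):ℤ)) := by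
          rw [Int.modEq_iff_dvd]
          exact dvd_sub_comm.mp (hmodkey t)
        exact this
      have hdm : (D:ℤ) * (m / D) + m % D = m := Int.mul_ediv_add_emod m D
      have hdmQ : (D:ℚ) * ((m / (D:ℤ) : ℤ):ℚ) + ((m % (D:ℤ) : ℤ):ℚ) = ((m:ℤ):ℚ) := by
        exact_mod_cast congrArg (Int.cast : ℤ → ℚ) hdm
      have : ((m / (D:ℤ) : ℤ):ℚ) * (D:ℚ) = ((m:ℤ):ℚ) - ((e (t % D) : ℤ):ℚ) := by
        rw [← hme]
        linarith
      rw [inv_mul_eq_div, eq_div_iff hD'.ne']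
      exact this
  · -- negative error term
    set e : ℕ → ℤ := fun i => (P.eval ((i:ℕ):ℤ) - 1) % (D:ℤ) + 1 with hedef
    refine ⟨T, D, hD, fun i => C ((D:ℚ))⁻¹ * (P.map (Int.castRingHom ℚ) - C ((e i : ℤ):ℚ)), ?_, ?_⟩
    · intro i j _ _
      refine aux_dl _ _ _ _ ?_
      by_cases hnd : 0 < (P.map (Int.castRingHom ℚ)).degree
      · exact Or.inl hnd
      · right
        rw [hedef]
        simp only
        rw [hconst hnd i j]
    · intro t ht
      have hne := hThT t ht
      set m : ℤ := P.eval ((t:ℕ):ℤ) with hmdef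
      have hfl : ⌊((f.eval ((t:ℕ):ℤ) : ℤ) : ℚ) / ((h.eval ((t:ℕ):ℤ) : ℤ) : ℚ)⌋ = (m - 1) / (D:ℤ) := by
        rw [hfeval t hne]
        exact floorB m D hD _ (hneg t (by omega)) (hTsT t ht).2
      rw [hfl]
      have hgv : (C ((D:ℚ))⁻¹ * (P.map (Int.castRingHom ℚ) - C ((e (t % D) : ℤ):ℚ))).eval ((t:ℕ):ℚ)
          = ((D:ℚ))⁻¹ * (((m:ℤ):ℚ) - ((e (t % D) : ℤ):ℚ)) := by
        rw [show ((t:ℕ):ℚ) = (((t:ℕ):ℤ):ℚ) by push_cast; ring]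
        simp [eval_intCast_map, hmdef]
      rw [hgv]
      have hme : (m - 1) % (D:ℤ) = (P.eval (((t % D : ℕ):ℕ):ℤ) - 1) % (D:ℤ) := by
        have : Int.ModEq (D:ℤ) (m - 1) (P.eval (((t % D : ℕ):ℕ):ℤ) - 1) := by
          rw [Int.modEq_iff_dvd]
          have := dvd_sub_comm.mp (hmodkey t)
          simpa using this
        exact this
      have hdm : (D:ℤ) * ((m - 1) / D) + (m - 1) % D = m - 1 := Int.mul_ediv_add_emod (m - 1) D
      have hkey : (((m - 1) / (D:ℤ) : ℤ):ℚ) * (D:ℚ) = ((m:ℤ):ℚ) - ((e (t % D) : ℤ):ℚ) := by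
        have he : (e (t % D) : ℤ) = (m - 1) % (D:ℤ) + 1 := by
          rw [hedef]; simp only; rw [hme]
        have hdmQ : (D:ℚ) * (((m - 1) / (D:ℤ) : ℤ):ℚ) + (((m - 1) % (D:ℤ) : ℤ):ℚ) = ((m:ℤ):ℚ) - 1 := by
          exact_mod_cast congrArg (Int.cast : ℤ → ℚ) hdm
        rw [he]
        push_cast
        push_cast at hdmQ
        linarith
      rw [inv_mul_eq_div, eq_div_iff hD'.ne']
      exact hkey
end

section
/- Let b_1, ..., b_n ∈ ℚ[t]^m be polynomial vectors and fix q ∈ ℚ such that the evaluated vectors b_1(q), ..., b_n(q) ∈ ℚ^m are linearly independent. Then applying the Gram–Schmidt orthogonalization (without normalization) to b_1(q), ..., b_n(q) over ℚ gives the same result as applying Gram–Schmidt to b_1(t), ..., b_n(t) over the field ℚ(t) and then evaluating the resulting vectors at t = q. -/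
open Polynomial Filter

noncomputable def dotF {F : Type*} [CommRing F] {m : ℕ} (u v : Fin m → F) : F :=
  ∑ k, u k * v k

noncomputable def gs {F : Type*} [Field F] {m : ℕ} (f : ℕ → (Fin m → F)) : ℕ → (Fin m → F)
  | i => f i - ∑ j : Fin i,
      (dotF (f i) (gs f j) / dotF (gs f j) (gs f j)) • gs f j
  termination_by i => i
  decreasing_by exact j.2

noncomputable def gsCoeff {F : Type*} [Field F] {m : ℕ} (f : ℕ → (Fin m → F)) (i j : ℕ) : F :=
  dotF (f i) (gs f j) / dotF (gs f j) (gs f j)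

/-- `x : RatFunc ℚ` has a representation `p / s` with `s q ≠ 0`, and its value at `q` is `c`. -/
def Good (q : ℚ) (x : RatFunc ℚ) (c : ℚ) : Prop :=
  ∃ p s : Polynomial ℚ, s.eval q ≠ 0 ∧
    x * algebraMap (Polynomial ℚ) (RatFunc ℚ) s = algebraMap (Polynomial ℚ) (RatFunc ℚ) p ∧
    p.eval q / s.eval q = c

lemma good_algebraMap (q : ℚ) (p : Polynomial ℚ) :
    Good q (algebraMap (Polynomial ℚ) (RatFunc ℚ) p) (p.eval q) :=
  ⟨p, 1, by simp, by simp, by simp⟩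

lemma good_add {q : ℚ} {x y : RatFunc ℚ} {c d : ℚ} (hx : Good q x c) (hy : Good q y d) :
    Good q (x + y) (c + d) := by
  obtain ⟨p, s, hs, hxe, hc⟩ := hx
  obtain ⟨p', s', hs', hye, hd⟩ := hy
  refine ⟨p * s' + p' * s, s * s', by simp [hs, hs'], ?_, ?_⟩
  · push_cast [map_mul, map_add]
    ring_nf
    linear_combination (algebraMap (Polynomial ℚ) (RatFunc ℚ) s') * hxe +
      (algebraMap (Polynomial ℚ) (RatFunc ℚ) s) * hye
  · rw [← hc, ← hd]; field_simp; simp only [Polynomial.eval_add, Polynomial.eval_mul]; ring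

lemma good_mul {q : ℚ} {x y : RatFunc ℚ} {c d : ℚ} (hx : Good q x c) (hy : Good q y d) :
    Good q (x * y) (c * d) := by
  obtain ⟨p, s, hs, hxe, hc⟩ := hx
  obtain ⟨p', s', hs', hye, hd⟩ := hy
  refine ⟨p * p', s * s', by simp [hs, hs'], ?_, ?_⟩
  · push_cast [map_mul]
    linear_combination (algebraMap (Polynomial ℚ) (RatFunc ℚ) s * x) * hye +
      (algebraMap (Polynomial ℚ) (RatFunc ℚ) p') * hxe
  · rw [← hc, ← hd]; field_simp; simp only [Polynomial.eval_mul]; ring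

lemma good_neg {q : ℚ} {x : RatFunc ℚ} {c : ℚ} (hx : Good q x c) : Good q (-x) (-c) := by
  obtain ⟨p, s, hs, hxe, hc⟩ := hx
  exact ⟨-p, s, hs, by rw [neg_mul, hxe, map_neg], by rw [Polynomial.eval_neg, neg_div, hc]⟩

lemma good_sub {q : ℚ} {x y : RatFunc ℚ} {c d : ℚ} (hx : Good q x c) (hy : Good q y d) :
    Good q (x - y) (c - d) := by
  simpa [sub_eq_add_neg] using good_add hx (good_neg hy)

lemma good_div {q : ℚ} {x y : RatFunc ℚ} {c d : ℚ} (hx : Good q x c) (hy : Good q y d)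
    (hd : d ≠ 0) : Good q (x / y) (c / d) := by
  obtain ⟨p, s, hs, hxe, hc⟩ := hx
  obtain ⟨p', s', hs', hye, hd'⟩ := hy
  have hp'q : p'.eval q ≠ 0 := by
    intro h0; rw [← hd', h0, zero_div] at hd; exact hd rfl
  have hp' : p' ≠ 0 := fun h => hp'q (by simp [h])
  have hyne : y ≠ 0 := by
    intro h0
    rw [h0, zero_mul] at hye
    exact hp' ((map_eq_zero_iff _ (RatFunc.algebraMap_injective ℚ)).mp hye.symm)
  refine ⟨p * s', s * p', by simp [hs, hp'q], ?_, ?_⟩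
  · push_cast [map_mul]
    field_simp
    linear_combination (algebraMap (Polynomial ℚ) (RatFunc ℚ) p') * hxe -
      (algebraMap (Polynomial ℚ) (RatFunc ℚ) p) * hye
  · rw [← hc, ← hd']; field_simp; simp only [Polynomial.eval_mul]; ring

lemma good_sum {q : ℚ} {ι : Type*} (t : Finset ι) (x : ι → RatFunc ℚ) (c : ι → ℚ)
    (h : ∀ j ∈ t, Good q (x j) (c j)) : Good q (∑ j ∈ t, x j) (∑ j ∈ t, c j) := by
  classical
  induction t using Finset.cons_induction with
  | empty => exact ⟨0, 1, by simp, by simp, by simp⟩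
  | cons a t ha ih =>
    rw [Finset.sum_cons, Finset.sum_cons]
    exact good_add (h a (Finset.mem_cons_self a t))
      (ih fun j hj => h j (Finset.mem_cons_of_mem hj))

lemma good_eval {q : ℚ} {x : RatFunc ℚ} {c : ℚ} (hx : Good q x c) :
    RatFunc.eval (RingHom.id ℚ) q x = c := by
  obtain ⟨p, s, hs, hxe, hc⟩ := hx
  have hden0 : x.denom ≠ 0 := x.denom_ne_zero
  have hdenF : algebraMap (Polynomial ℚ) (RatFunc ℚ) x.denom ≠ 0 :=
    fun h => hden0 ((map_eq_zero_iff _ (RatFunc.algebraMap_injective ℚ)).mp h)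
  have key : x.num * s = p * x.denom := by
    apply RatFunc.algebraMap_injective ℚ
    push_cast [map_mul]
    have hx' : algebraMap (Polynomial ℚ) (RatFunc ℚ) x.num =
        x * algebraMap (Polynomial ℚ) (RatFunc ℚ) x.denom :=
      (div_eq_iff hdenF).mp (RatFunc.num_div_denom x)
    calc algebraMap (Polynomial ℚ) (RatFunc ℚ) x.num * algebraMap (Polynomial ℚ) (RatFunc ℚ) s
        = (x * algebraMap (Polynomial ℚ) (RatFunc ℚ) x.denom) *
            algebraMap (Polynomial ℚ) (RatFunc ℚ) s := by rw [← hx']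
      _ = (x * algebraMap (Polynomial ℚ) (RatFunc ℚ) s) *
            algebraMap (Polynomial ℚ) (RatFunc ℚ) x.denom := by ring
      _ = algebraMap (Polynomial ℚ) (RatFunc ℚ) p *
            algebraMap (Polynomial ℚ) (RatFunc ℚ) x.denom := by rw [hxe]
  have hdvd : x.denom ∣ s := by
    apply (RatFunc.isCoprime_num_denom x).symm.dvd_of_dvd_mul_left
    exact ⟨p, by linear_combination key⟩
  have hdq : x.denom.eval q ≠ 0 := by
    obtain ⟨t, ht⟩ := hdvd
    intro h0
    rw [ht] at hs
    simp [h0] at hs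
  have keyq : x.num.eval q * s.eval q = p.eval q * x.denom.eval q := by
    have := congrArg (Polynomial.eval q) key
    simpa using this
  rw [RatFunc.eval]
  show x.num.eval q / x.denom.eval q = c
  rw [← hc]
  field_simp
  linear_combination keyq

/-- gs stays in the span of the earlier vectors. -/
lemma gs_mem_span {F : Type*} [Field F] {m : ℕ} (f : ℕ → (Fin m → F)) :
    ∀ i, gs f i ∈ Submodule.span F (f '' Set.Iic i) := by
  intro i
  induction i using Nat.strong_induction_on with
  | _ i ih =>
    rw [gs]
    apply sub_mem
    · exact Submodule.subset_span ⟨i, le_refl i, rfl⟩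
    · apply Submodule.sum_mem
      intro j _
      apply Submodule.smul_mem
      exact Submodule.span_mono (Set.image_mono fun a (ha : a ≤ (j : ℕ)) =>
        le_trans ha (le_of_lt j.2)) (ih j j.2)

lemma gs_sub_mem_span {F : Type*} [Field F] {m : ℕ} (f : ℕ → (Fin m → F)) (i : ℕ) :
    f i - gs f i ∈ Submodule.span F (f '' Set.Iio i) := by
  rw [gs]
  have : f i - (f i - ∑ j : Fin i,
      (dotF (f i) (gs f j) / dotF (gs f j) (gs f j)) • gs f j) =
      ∑ j : Fin i, (dotF (f i) (gs f j) / dotF (gs f j) (gs f j)) • gs f j := by ring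
  rw [this]
  apply Submodule.sum_mem
  intro j _
  apply Submodule.smul_mem
  exact Submodule.span_mono (Set.image_mono fun a (ha : a ≤ (j : ℕ)) =>
    lt_of_le_of_lt ha j.2) (gs_mem_span f j)

lemma gs_ne_zero {m n : ℕ} (g : ℕ → Fin m → ℚ)
    (h : LinearIndependent ℚ (fun i : Fin n => g i)) :
    ∀ i < n, gs g i ≠ 0 := by
  intro i hi h0
  have hmem : g i ∈ Submodule.span ℚ (g '' Set.Iio i) := by
    have := gs_sub_mem_span g i
    rwa [h0, sub_zero] at this
  have hnot : g i ∉ Submodule.span ℚ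
      ((fun j : Fin n => g j) '' {j : Fin n | (j : ℕ) < i}) := by
    have := h.notMem_span_image (s := {j : Fin n | (j : ℕ) < i}) (x := ⟨i, hi⟩)
      (by simp)
    exact this
  apply hnot
  refine Submodule.span_mono ?_ hmem
  rintro a ⟨j, hj, rfl⟩
  exact ⟨⟨j, lt_trans hj hi⟩, hj, rfl⟩

lemma dot_self_ne_zero {m : ℕ} (v : Fin m → ℚ) (hv : v ≠ 0) : dotF v v ≠ 0 := by
  intro h0
  apply hv
  funext k
  have := (Finset.sum_eq_zero_iff_of_nonneg
    (fun k _ => mul_self_nonneg (v k))).mp h0 k (Finset.mem_univ k)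
  exact mul_self_eq_zero.mp this

/-- Gram–Schmidt orthogonalization (without normalization) commutes with
evaluation at a point `q ∈ ℚ` where the evaluated vectors are linearly independent. -/
theorem gramSchmidt_comm_eval {m n : ℕ} (b : ℕ → Fin m → Polynomial ℚ) (q : ℚ)
    (h : LinearIndependent ℚ (fun i : Fin n => fun k : Fin m => (b i k).eval q)) :
    ∀ i < n, ∀ k : Fin m,
      gs (fun j : ℕ => fun k : Fin m => (b j k).eval q) i k =
        RatFunc.eval (RingHom.id ℚ) q
          (gs (fun j : ℕ => fun k : Fin m =>
            algebraMap (Polynomial ℚ) (RatFunc ℚ) (b j k)) i k) := by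
  set g : ℕ → Fin m → ℚ := fun j k => (b j k).eval q with hg
  set f : ℕ → Fin m → RatFunc ℚ := fun j k => algebraMap (Polynomial ℚ) (RatFunc ℚ) (b j k)
    with hf
  have main : ∀ i, i < n → ∀ k : Fin m, Good q (gs f i k) (gs g i k) := by
    intro i
    induction i using Nat.strong_induction_on with
    | _ i ih =>
      intro hi k
      rw [gs, gs]
      simp only [Pi.sub_apply, Finset.sum_apply, Pi.smul_apply, smul_eq_mul]
      apply good_sub
      · exact good_algebraMap q (b i k)
      · apply good_sum
        intro j _
        have hjn : (j : ℕ) < n := lt_trans j.2 hi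
        apply good_mul
        · apply good_div
          · apply good_sum
            intro l _
            exact good_mul (good_algebraMap q (b i l)) (ih j j.2 hjn l)
          · apply good_sum
            intro l _
            exact good_mul (ih j j.2 hjn l) (ih j j.2 hjn l)
          · exact dot_self_ne_zero _ (gs_ne_zero g h j hjn)
        · exact ih j j.2 hjn k
  intro i hi k
  exact (good_eval (main i hi k)).symm
end

section
/- Let f_1, ..., f_n ∈ ℚ[t]^m be parametric vectors with degrees d_1 ≤ ... ≤ d_n whose pilot vectors (vectors of leading coefficients in degree d_i) are linearly independent over ℚ. Let f_i* be the Gram–Schmidt vectors computed over ℚ(t). Then deg(f_i*) = deg(f_i) for all i. -/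
open Polynomial Filter

/-- The degree of a vector of polynomials: max of the coordinate degrees (`natDegree`). -/
noncomputable def degVec {m : ℕ} {R : Type*} [Semiring R] (f : Fin m → Polynomial R) : ℕ :=
  Finset.univ.sup fun k => (f k).natDegree

/-- The pilot vector: the vector of coefficients in degree `degVec f`. -/
noncomputable def pilot {m : ℕ} {R : Type*} [Semiring R] (f : Fin m → Polynomial R) : Fin m → R :=
  fun k => (f k).coeff (degVec f)

/-- View a vector of rational polynomials inside ℚ(t)^m. -/
noncomputable def toRF {m : ℕ} (f : Fin m → Polynomial ℚ) : Fin m → RatFunc ℚ :=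
  fun k => algebraMap (Polynomial ℚ) (RatFunc ℚ) (f k)

/-- Evaluation of a rational function at a real number (junk at poles). -/
noncomputable def evalR (r : RatFunc ℚ) (t : ℝ) : ℝ :=
  RatFunc.eval (algebraMap ℚ ℝ) t r

namespace GSdeg

/-- leading coefficient of a rational function at degree `D` (0 if intDegree ≠ D). -/
noncomputable def lcAt (D : ℤ) (r : RatFunc ℚ) : ℚ :=
  if r.intDegree = D then r.num.leadingCoeff else 0

lemma intDegree_def (r : RatFunc ℚ) :
    r.intDegree = (r.num.natDegree : ℤ) - r.denom.natDegree := rfl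

lemma lcAt_zero (D : ℤ) : lcAt D 0 = 0 := by
  unfold lcAt; split <;> simp

lemma ne_zero_of_lcAt {D : ℤ} {r : RatFunc ℚ} (h : lcAt D r ≠ 0) : r ≠ 0 := by
  intro h0; rw [h0, lcAt_zero] at h; exact h rfl

lemma intDegree_eq_of_lcAt {D : ℤ} {r : RatFunc ℚ} (h : lcAt D r ≠ 0) : r.intDegree = D := by
  unfold lcAt at h
  by_contra hc; rw [if_neg hc] at h; exact h rfl

lemma lcAt_self {r : RatFunc ℚ} (h : r ≠ 0) : lcAt r.intDegree r ≠ 0 := by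
  unfold lcAt
  rw [if_pos rfl]
  exact leadingCoeff_ne_zero.mpr (RatFunc.num_ne_zero h)

lemma coeff_mul_of_le (P Q : ℚ[X]) (e1 e2 : ℕ) (h1 : P.natDegree ≤ e1) (h2 : Q.natDegree ≤ e2) :
    (P * Q).coeff (e1 + e2) = P.coeff e1 * Q.coeff e2 := by
  rcases lt_or_eq_of_le h1 with h1' | h1'
  · rw [Polynomial.coeff_eq_zero_of_natDegree_lt h1', zero_mul,
      Polynomial.coeff_eq_zero_of_natDegree_lt
        (lt_of_le_of_lt natDegree_mul_le (by omega))]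
  · rcases lt_or_eq_of_le h2 with h2' | h2'
    · rw [Polynomial.coeff_eq_zero_of_natDegree_lt h2', mul_zero,
        Polynomial.coeff_eq_zero_of_natDegree_lt
          (lt_of_le_of_lt natDegree_mul_le (by omega))]
    · subst h1' h2'
      exact coeff_mul_degree_add_degree P Q

lemma lcAt_eq_coeff {D : ℕ} {r : RatFunc ℚ} (h : r.intDegree ≤ (D : ℤ)) :
    lcAt (D : ℤ) r = r.num.coeff (D + r.denom.natDegree) := by
  by_cases hD : r.intDegree = (D : ℤ)
  · have hnd : r.num.natDegree = D + r.denom.natDegree := by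
      rw [intDegree_def] at hD; omega
    rw [lcAt, if_pos hD, Polynomial.leadingCoeff, hnd]
  · have hlt : r.num.natDegree < D + r.denom.natDegree := by
      rw [intDegree_def] at h hD; omega
    rw [lcAt, if_neg hD, Polynomial.coeff_eq_zero_of_natDegree_lt hlt]

/-- Core lemma: if `A * denom c = num c * B` with `B` monic and `deg A ≤ E + deg B`, then
`intDegree c ≤ E` and the leading coefficient of `c` at `E` is the coefficient of `A`. -/
lemma key {c : RatFunc ℚ} {A B : ℚ[X]} (hB : B.Monic)
    (hrel : A * c.denom = c.num * B) (E : ℕ) (hA : A.natDegree ≤ E + B.natDegree) :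
    c.intDegree ≤ (E : ℤ) ∧ lcAt (E : ℤ) c = A.coeff (E + B.natDegree) := by
  have hdeg : c.intDegree ≤ (E : ℤ) := by
    by_cases hc : c = 0
    · rw [hc, RatFunc.intDegree_zero]; exact_mod_cast Nat.zero_le E
    · have hnum := RatFunc.num_ne_zero hc
      have h1 : (c.num * B).natDegree = c.num.natDegree + B.natDegree :=
        natDegree_mul hnum hB.ne_zero
      have h2 : (A * c.denom).natDegree ≤ A.natDegree + c.denom.natDegree :=
        natDegree_mul_le
      rw [hrel, h1] at h2
      rw [intDegree_def]
      omega
  refine ⟨hdeg, ?_⟩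
  have hnum : c.num.natDegree ≤ E + c.denom.natDegree := by
    have := hdeg; rw [intDegree_def] at this; omega
  have e1 : (A * c.denom).coeff ((E + B.natDegree) + c.denom.natDegree)
      = A.coeff (E + B.natDegree) := by
    rw [coeff_mul_of_le A c.denom _ _ hA le_rfl, (RatFunc.monic_denom c).coeff_natDegree,
      mul_one]
  have e2 : (c.num * B).coeff ((E + c.denom.natDegree) + B.natDegree)
      = c.num.coeff (E + c.denom.natDegree) := by
    rw [coeff_mul_of_le _ _ _ _ hnum le_rfl, hB.coeff_natDegree, mul_one]
  rw [lcAt_eq_coeff hdeg, ← e2,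
    show (E + c.denom.natDegree) + B.natDegree = (E + B.natDegree) + c.denom.natDegree by ring,
    ← hrel, e1]

lemma num_natDegree_le {D : ℕ} {r : RatFunc ℚ} (h : r.intDegree ≤ (D : ℤ)) :
    r.num.natDegree ≤ D + r.denom.natDegree := by
  rw [intDegree_def] at h; omega

lemma add_bound {a b : RatFunc ℚ} {D : ℕ} (ha : a.intDegree ≤ (D : ℤ))
    (hb : b.intDegree ≤ (D : ℤ)) :
    (a + b).intDegree ≤ (D : ℤ) ∧ lcAt D (a + b) = lcAt D a + lcAt D b := by
  have hrel := (RatFunc.num_denom_add a b).symm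
  have hB : (a.denom * b.denom).Monic := (RatFunc.monic_denom a).mul (RatFunc.monic_denom b)
  have hna := num_natDegree_le ha
  have hnb := num_natDegree_le hb
  have hnB : (a.denom * b.denom).natDegree = a.denom.natDegree + b.denom.natDegree :=
    natDegree_mul (RatFunc.denom_ne_zero a) (RatFunc.denom_ne_zero b)
  have hA : (a.num * b.denom + a.denom * b.num).natDegree
      ≤ D + (a.denom * b.denom).natDegree := by
    refine le_trans (natDegree_add_le _ _) (max_le ?_ ?_) <;>
      · refine le_trans natDegree_mul_le ?_
        omega
  obtain ⟨h1, h2⟩ := key hB hrel D hA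
  refine ⟨h1, ?_⟩
  have c1 : (a.num * b.denom).coeff (D + (a.denom * b.denom).natDegree) = lcAt D a := by
    rw [hnB, show D + (a.denom.natDegree + b.denom.natDegree)
        = (D + a.denom.natDegree) + b.denom.natDegree by ring,
      coeff_mul_of_le _ _ _ _ hna le_rfl, (RatFunc.monic_denom b).coeff_natDegree, mul_one,
      ← lcAt_eq_coeff ha]
  have c2 : (a.denom * b.num).coeff (D + (a.denom * b.denom).natDegree) = lcAt D b := by
    rw [hnB, show D + (a.denom.natDegree + b.denom.natDegree)
        = a.denom.natDegree + (D + b.denom.natDegree) by ring,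
      coeff_mul_of_le _ _ _ _ le_rfl hnb, (RatFunc.monic_denom a).coeff_natDegree, one_mul,
      ← lcAt_eq_coeff hb]
  rw [h2, Polynomial.coeff_add, c1, c2]

lemma neg_bound {a : RatFunc ℚ} {D : ℕ} (ha : a.intDegree ≤ (D : ℤ)) :
    (-a).intDegree ≤ (D : ℤ) ∧ lcAt D (-a) = - lcAt D a := by
  have hrel := (RatFunc.num_denom_neg a).symm
  have hna := num_natDegree_le ha
  have hA : (-a.num).natDegree ≤ D + a.denom.natDegree := by
    rwa [natDegree_neg]
  obtain ⟨h1, h2⟩ := key (RatFunc.monic_denom a) hrel D hA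
  refine ⟨h1, ?_⟩
  rw [h2, Polynomial.coeff_neg, ← lcAt_eq_coeff ha]

lemma mul_bound {a b : RatFunc ℚ} {D1 D2 : ℕ} (ha : a.intDegree ≤ (D1 : ℤ))
    (hb : b.intDegree ≤ (D2 : ℤ)) :
    (a * b).intDegree ≤ ((D1 + D2 : ℕ) : ℤ) ∧
      lcAt (D1 + D2 : ℕ) (a * b) = lcAt D1 a * lcAt D2 b := by
  have hrel := (RatFunc.num_denom_mul a b).symm
  have hB : (a.denom * b.denom).Monic := (RatFunc.monic_denom a).mul (RatFunc.monic_denom b)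
  have hna := num_natDegree_le ha
  have hnb := num_natDegree_le hb
  have hnB : (a.denom * b.denom).natDegree = a.denom.natDegree + b.denom.natDegree :=
    natDegree_mul (RatFunc.denom_ne_zero a) (RatFunc.denom_ne_zero b)
  have hA : (a.num * b.num).natDegree ≤ (D1 + D2) + (a.denom * b.denom).natDegree := by
    refine le_trans natDegree_mul_le ?_; omega
  obtain ⟨h1, h2⟩ := key hB hrel (D1 + D2) hA
  refine ⟨h1, ?_⟩
  rw [h2, hnB, show (D1 + D2) + (a.denom.natDegree + b.denom.natDegree)
      = (D1 + a.denom.natDegree) + (D2 + b.denom.natDegree) by ring,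
    coeff_mul_of_le _ _ _ _ hna hnb, ← lcAt_eq_coeff ha, ← lcAt_eq_coeff hb]

lemma div_bound {a q : RatFunc ℚ} {D1 D2 : ℕ} (hq : q ≠ 0) (hqd : q.intDegree = (D2 : ℤ))
    (ha : a.intDegree ≤ ((D1 + D2 : ℕ) : ℤ)) :
    (a / q).intDegree ≤ (D1 : ℤ) ∧ lcAt D1 (a / q) = lcAt (D1 + D2 : ℕ) a / lcAt D2 q := by
  have hqlc : lcAt D2 q ≠ 0 := by
    have := lcAt_self hq; rwa [hqd] at this
  by_cases ha0 : a = 0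
  · subst ha0
    rw [zero_div]
    refine ⟨by rw [RatFunc.intDegree_zero]; exact_mod_cast Nat.zero_le D1, ?_⟩
    rw [lcAt_zero, lcAt_zero, zero_div]
  · have hr0 : a / q ≠ 0 := div_ne_zero ha0 hq
    have hmm : (a / q) * q = a := div_mul_cancel₀ a hq
    have hdd : (a / q).intDegree + (D2 : ℤ) = a.intDegree := by
      rw [← hqd, ← RatFunc.intDegree_mul hr0 hq, hmm]
    have h1 : (a / q).intDegree ≤ (D1 : ℤ) := by
      push_cast at ha
      omega
    refine ⟨h1, ?_⟩
    have := (mul_bound h1 (le_of_eq hqd)).2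
    rw [hmm] at this
    rw [this, mul_div_assoc, div_self hqlc, mul_one]

lemma sum_bound {ι : Type*} (s : Finset ι) (r : ι → RatFunc ℚ) (D : ℕ)
    (h : ∀ i ∈ s, (r i).intDegree ≤ (D : ℤ)) :
    (∑ i ∈ s, r i).intDegree ≤ (D : ℤ) ∧
      lcAt D (∑ i ∈ s, r i) = ∑ i ∈ s, lcAt D (r i) := by
  induction s using Finset.cons_induction with
  | empty =>
    refine ⟨?_, ?_⟩
    · rw [Finset.sum_empty, RatFunc.intDegree_zero]; exact_mod_cast Nat.zero_le D
    · rw [Finset.sum_empty, Finset.sum_empty, lcAt_zero]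
  | cons i s his ih =>
    rw [Finset.sum_cons, Finset.sum_cons]
    have h1 := h i (Finset.mem_cons_self i s)
    obtain ⟨ih1, ih2⟩ := ih fun j hj => h j (Finset.mem_cons_of_mem hj)
    obtain ⟨hA, hB⟩ := add_bound h1 ih1
    exact ⟨hA, by rw [hB, ih2]⟩

lemma dot_bound {m : ℕ} {u v : Fin m → RatFunc ℚ} {D1 D2 : ℕ}
    (hu : ∀ k, (u k).intDegree ≤ (D1 : ℤ)) (hv : ∀ k, (v k).intDegree ≤ (D2 : ℤ)) :
    (dotF u v).intDegree ≤ ((D1 + D2 : ℕ) : ℤ) ∧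
      lcAt (D1 + D2 : ℕ) (dotF u v) = ∑ k, lcAt D1 (u k) * lcAt D2 (v k) := by
  unfold dotF
  obtain ⟨h1, h2⟩ := sum_bound Finset.univ (fun k => u k * v k) (D1 + D2)
    (fun k _ => (mul_bound (hu k) (hv k)).1)
  exact ⟨h1, h2.trans (Finset.sum_congr rfl fun k _ => (mul_bound (hu k) (hv k)).2)⟩

lemma dot_self_bound {m : ℕ} {v : Fin m → RatFunc ℚ} {D : ℕ}
    (hb : ∀ k, (v k).intDegree ≤ (D : ℤ)) (hnz : ∃ k, lcAt D (v k) ≠ 0) :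
    dotF v v ≠ 0 ∧ (dotF v v).intDegree = ((D + D : ℕ) : ℤ) := by
  obtain ⟨hd, hl⟩ := dot_bound hb hb
  obtain ⟨k0, hk0⟩ := hnz
  have hpos : (0:ℚ) < ∑ k, lcAt D (v k) * lcAt D (v k) := by
    exact Finset.sum_pos' (fun k _ => mul_self_nonneg _)
      ⟨k0, Finset.mem_univ _, mul_self_pos.mpr hk0⟩
  have hne : lcAt (D + D : ℕ) (dotF v v) ≠ 0 := by
    rw [hl]; exact ne_of_gt hpos
  exact ⟨ne_zero_of_lcAt hne, intDegree_eq_of_lcAt hne⟩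

lemma lcAt_algebraMap {p : ℚ[X]} {D : ℕ} (h : p.natDegree ≤ D) :
    (algebraMap ℚ[X] (RatFunc ℚ) p).intDegree ≤ (D : ℤ) ∧
      lcAt D (algebraMap ℚ[X] (RatFunc ℚ) p) = p.coeff D := by
  have hi : (algebraMap ℚ[X] (RatFunc ℚ) p).intDegree = p.natDegree :=
    RatFunc.intDegree_polynomial
  have hle : (algebraMap ℚ[X] (RatFunc ℚ) p).intDegree ≤ (D : ℤ) := by
    rw [hi]; exact_mod_cast h
  refine ⟨hle, ?_⟩
  rw [lcAt_eq_coeff hle, RatFunc.num_algebraMap, RatFunc.denom_algebraMap, natDegree_one,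
    add_zero]


lemma pilot_add_span_ne {m n : ℕ} {f : ℕ → Fin m → Polynomial ℚ}
    (hli : LinearIndependent ℚ (fun i : Fin n => pilot (f i))) {i : ℕ} (hin : i < n)
    {v : Fin m → ℚ} (hv : v ∈ Submodule.span ℚ ((fun j : ℕ => pilot (f j)) '' Set.Iio i)) :
    pilot (f i) + v ≠ 0 := by
  intro h0
  have hnot := hli.notMem_span_image (s := {j : Fin n | (j : ℕ) < i}) (x := ⟨i, hin⟩)
    (by simp)
  apply hnot
  have himg : (fun i : Fin n => pilot (f i)) '' {j : Fin n | (j : ℕ) < i}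
      = (fun j : ℕ => pilot (f j)) '' Set.Iio i := by
    ext x
    constructor
    · rintro ⟨j, hj, rfl⟩
      exact ⟨(j : ℕ), hj, rfl⟩
    · rintro ⟨j, hj, rfl⟩
      exact ⟨⟨j, lt_trans hj hin⟩, hj, rfl⟩
  rw [himg]
  show pilot (f i) ∈ _
  rw [eq_neg_of_add_eq_zero_left h0]
  exact Submodule.neg_mem _ hv

end GSdeg

set_option synthInstance.maxHeartbeats 1000000 in
/-- if `f_1, ..., f_n ∈ ℚ[t]^m` have nondecreasing degrees and linearly
independent pilot vectors, then the Gram–Schmidt vectors over ℚ(t) satisfy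
`deg(f_i*) = deg(f_i)` (every coordinate has degree ≤ d i, and the maximum d i is attained). -/
theorem gs_degree_eq {m n : ℕ} (f : ℕ → Fin m → Polynomial ℚ) (d : ℕ → ℕ)
    (hdeg : ∀ i < n, f i ≠ 0 ∧ degVec (f i) = d i)
    (hmono : ∀ i j, i ≤ j → j < n → d i ≤ d j)
    (hli : LinearIndependent ℚ (fun i : Fin n => pilot (f i))) :
    ∀ i < n,
      (∀ k : Fin m, (gs (fun j => toRF (f j)) i k).intDegree ≤ (d i : ℤ)) ∧
      (∃ k : Fin m, gs (fun j => toRF (f j)) i k ≠ 0 ∧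
        (gs (fun j => toRF (f j)) i k).intDegree = (d i : ℤ)) := by
  set g : ℕ → Fin m → RatFunc ℚ := gs (fun j => toRF (f j)) with hg
  have main : ∀ i, i < n → (∀ k, (g i k).intDegree ≤ (d i : ℤ)) ∧
      (fun k => GSdeg.lcAt (d i) (g i k)) - pilot (f i) ∈
        Submodule.span ℚ ((fun j : ℕ => pilot (f j)) '' Set.Iio i) := by
    intro i
    induction i using Nat.strong_induction_on with
    | _ i IH =>
    intro hin
    have hle : ∀ k, (f i k).natDegree ≤ d i := by
      intro k
      rw [← (hdeg i hin).2]
      exact Finset.le_sup (f := fun k => (f i k).natDegree) (Finset.mem_univ k)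
    have hfb : ∀ k, (toRF (f i) k).intDegree ≤ (d i : ℤ) := fun k =>
      (GSdeg.lcAt_algebraMap (hle k)).1
    have hflc : ∀ k, GSdeg.lcAt (d i) (toRF (f i) k) = pilot (f i) k := by
      intro k
      have h2 := (GSdeg.lcAt_algebraMap (hle k)).2
      show GSdeg.lcAt (d i) (algebraMap ℚ[X] (RatFunc ℚ) (f i k))
        = (f i k).coeff (degVec (f i))
      rw [h2, (hdeg i hin).2]
    set S := Submodule.span ℚ ((fun j : ℕ => pilot (f j)) '' Set.Iio i) with hS
    set T : Fin i → Fin m → RatFunc ℚ :=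
      fun j => ((dotF (toRF (f i)) (g ↑j) / dotF (g ↑j) (g ↑j)) • g ↑j
        : Fin m → RatFunc ℚ) with hT
    have hterm : ∀ j : Fin i,
        (∀ k, (T j k).intDegree ≤ (d i : ℤ)) ∧
        (fun k => GSdeg.lcAt (d i) (T j k)) ∈ S := by
      intro j
      have hji : (j : ℕ) < i := j.2
      have hjn : (j : ℕ) < n := hji.trans hin
      obtain ⟨hbj, hsj⟩ := IH (j : ℕ) hji hjn
      have hdji : d (j : ℕ) ≤ d i := hmono _ i (le_of_lt hji) hin
      -- nonzero leading vector of g j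
      have hleadnz : (fun k => GSdeg.lcAt (d (j : ℕ)) (g ↑j k)) ≠ 0 := by
        have h1 := GSdeg.pilot_add_span_ne hli hjn hsj
        intro h0
        apply h1
        rw [h0]
        simp
      obtain ⟨k0, hk0⟩ := Function.ne_iff.mp hleadnz
      obtain ⟨hQnz, hQdeg⟩ := GSdeg.dot_self_bound hbj ⟨k0, by simpa using hk0⟩
      obtain ⟨hNdeg, -⟩ := GSdeg.dot_bound hfb hbj
      have hμ := GSdeg.div_bound (D1 := d i - d (j : ℕ)) (D2 := d (j : ℕ) + d (j : ℕ))
        hQnz hQdeg (by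
          rw [show (d i - d (j : ℕ)) + (d (j : ℕ) + d (j : ℕ)) = d i + d (j : ℕ) by omega]
          exact hNdeg)
      have hTb : ∀ k, (T j k).intDegree ≤ (d i : ℤ) ∧
          GSdeg.lcAt (d i) (T j k)
            = GSdeg.lcAt ((d i - d (j : ℕ) : ℕ))
                (dotF (toRF (f i)) (g ↑j) / dotF (g ↑j) (g ↑j)) *
              GSdeg.lcAt (d (j : ℕ)) (g ↑j k) := by
        intro k
        have hmb := GSdeg.mul_bound (D1 := d i - d (j : ℕ)) (D2 := d (j : ℕ))
          hμ.1 (hbj k)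
        rw [show (d i - d (j : ℕ)) + d (j : ℕ) = d i by omega] at hmb
        have hTk : T j k = (dotF (toRF (f i)) (g ↑j) / dotF (g ↑j) (g ↑j)) * g ↑j k := by
          simp [hT, Pi.smul_apply, smul_eq_mul]
        rw [hTk]
        exact hmb
      refine ⟨fun k => (hTb k).1, ?_⟩
      have hmemj : (fun k => GSdeg.lcAt (d (j : ℕ)) (g ↑j k)) ∈ S := by
        have h1 : pilot (f (j : ℕ)) ∈ S :=
          Submodule.subset_span ⟨(j : ℕ), hji, rfl⟩
        have h2 : (fun k => GSdeg.lcAt (d (j : ℕ)) (g ↑j k)) - pilot (f (j : ℕ)) ∈ S :=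
          Submodule.span_mono
            (Set.image_mono (Set.Iio_subset_Iio (le_of_lt hji))) hsj
        have h3 := Submodule.add_mem S h1 h2
        have e : pilot (f (j : ℕ)) + ((fun k => GSdeg.lcAt (d (j : ℕ)) (g ↑j k))
            - pilot (f (j : ℕ))) = (fun k => GSdeg.lcAt (d (j : ℕ)) (g ↑j k)) := by
          abel
        rwa [e] at h3
      have e2 : (fun k => GSdeg.lcAt (d i) (T j k))
          = GSdeg.lcAt ((d i - d (j : ℕ) : ℕ))
              (dotF (toRF (f i)) (g ↑j) / dotF (g ↑j) (g ↑j)) •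
            (fun k => GSdeg.lcAt (d (j : ℕ)) (g ↑j k)) := by
        funext k
        rw [(hTb k).2]
        rfl
      rw [e2]
      exact Submodule.smul_mem S _ hmemj
    have hgi : g i = toRF (f i) - ∑ j : Fin i, T j := by
      conv_lhs => rw [hg, gs]
    have hsumb : ∀ k, ((∑ j : Fin i, T j) k).intDegree ≤ (d i : ℤ) ∧
        GSdeg.lcAt (d i) ((∑ j : Fin i, T j) k)
          = ∑ j : Fin i, GSdeg.lcAt (d i) (T j k) := by
      intro k
      have happ : (∑ j : Fin i, T j) k = ∑ j : Fin i, T j k := by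
        simp [Finset.sum_apply]
      rw [happ]
      exact GSdeg.sum_bound Finset.univ (fun j => T j k) (d i)
        (fun j _ => (hterm j).1 k)
    have hik : ∀ k, (g i k).intDegree ≤ (d i : ℤ) ∧
        GSdeg.lcAt (d i) (g i k)
          = pilot (f i) k - ∑ j : Fin i, GSdeg.lcAt (d i) (T j k) := by
      intro k
      have hge : g i k = toRF (f i) k + (-(∑ j : Fin i, T j) k) := by
        rw [hgi]
        simp [sub_eq_add_neg]
      obtain ⟨hn1, hn2⟩ := GSdeg.neg_bound (hsumb k).1
      have hab := GSdeg.add_bound (hfb k) (a := toRF (f i) k)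
        (b := -((∑ j : Fin i, T j) k)) hn1
      constructor
      · rw [hge]
        exact hab.1
      · rw [hge, hab.2, hn2, (hsumb k).2, hflc k, sub_eq_add_neg]
    refine ⟨fun k => (hik k).1, ?_⟩
    have e3 : (fun k => GSdeg.lcAt (d i) (g i k)) - pilot (f i)
        = - ∑ j : Fin i, (fun k => GSdeg.lcAt (d i) (T j k)) := by
      funext k
      simp only [Pi.sub_apply, Pi.neg_apply, Finset.sum_apply]
      rw [(hik k).2]
      ring
    rw [e3]
    exact Submodule.neg_mem S (Submodule.sum_mem S (fun j _ => (hterm j).2))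
  intro i hin
  obtain ⟨h1, h2⟩ := main i hin
  refine ⟨h1, ?_⟩
  have hne : (fun k => GSdeg.lcAt (d i) (g i k)) ≠ 0 := by
    have hx := GSdeg.pilot_add_span_ne hli hin h2
    intro h0
    apply hx
    rw [h0]
    simp
  obtain ⟨k, hk⟩ := Function.ne_iff.mp hne
  have hk' : GSdeg.lcAt (d i) (g i k) ≠ 0 := by simpa using hk
  exact ⟨k, GSdeg.ne_zero_of_lcAt hk', GSdeg.intDegree_eq_of_lcAt hk'⟩
end
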